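/- In G = ℤ² ⋊ ℤ/2ℤ (swap action) with a = ((1,0),0), t = ((0,0),1), every geodesic word over A = {a, a⁻¹, t, t⁻¹} contains at most two t-letters. -/

import Mathlib

/-- The coordinate-swapping automorphism of ℤ². -/
def swapAut : MulAut (Multiplicative (ℤ × ℤ)) :=
  AddEquiv.toMultiplicative (AddEquiv.prodComm : (ℤ × ℤ) ≃+ (ℤ × ℤ))

lemma swapAut_sq : swapAut ^ 2 = 1 := by
  apply MulEquiv.ext
  intro z
  show swapAut (swapAut z) = z
  cases z
  rfl

/-- The action of ℤ/2ℤ on ℤ² by swapping the two coordinates. -/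
def swapAction : Multiplicative (ZMod 2) →* MulAut (Multiplicative (ℤ × ℤ)) where
  toFun ε := swapAut ^ (Multiplicative.toAdd ε).val
  map_one' := rfl
  map_mul' x y := by
    show swapAut ^ _ = swapAut ^ _ * swapAut ^ _
    rw [← pow_add]
    have key : ∀ m n : ℕ, m % 2 = n % 2 → swapAut ^ m = swapAut ^ n := by
      intro m n h
      rw [← Nat.div_add_mod m 2, ← Nat.div_add_mod n 2, h, pow_add, pow_add,
        pow_mul, pow_mul, swapAut_sq]
      simp
    apply key
    have := ZMod.val_add (Multiplicative.toAdd x) (Multiplicative.toAdd y)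
    simp only [toAdd_mul] at *
    omega

/-- The group G = ℤ² ⋊ ℤ/2ℤ with the swap action. -/
abbrev GG := SemidirectProduct (Multiplicative (ℤ × ℤ)) (Multiplicative (ZMod 2)) swapAction

/-- The generator a = ((1,0), 0). -/
def ga : GG := SemidirectProduct.inl (Multiplicative.ofAdd ((1, 0) : ℤ × ℤ))

/-- The generator t = ((0,0), 1). -/
def gt : GG := SemidirectProduct.inr (Multiplicative.ofAdd (1 : ZMod 2))

/-- The element ((x,y), ε) of G. -/
def el (x y : ℤ) (ε : ZMod 2) : GG :=
  ⟨Multiplicative.ofAdd (x, y), Multiplicative.ofAdd ε⟩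

/-- The generating set A = {a, a⁻¹, t, t⁻¹}. -/
def GenSet : Set GG := {ga, ga⁻¹, gt, gt⁻¹}

/-- `w` is a word over the alphabet A. -/
def IsWord (w : List GG) : Prop := ∀ x ∈ w, x ∈ GenSet

/-- `w` is a word over A representing the group element `g` (via its product). -/
def Represents (w : List GG) (g : GG) : Prop := IsWord w ∧ w.prod = g

/-- The word length of `g`: minimal length of a word over A representing `g`. -/
noncomputable def wordLength (g : GG) : ℕ :=
  sInf {n | ∃ w : List GG, Represents w g ∧ w.length = n}

/-- A word over A is geodesic if no strictly shorter word over A represents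
the same element. -/
def IsGeodesic (w : List GG) : Prop :=
  IsWord w ∧ ∀ v : List GG, IsWord v → v.prod = w.prod → w.length ≤ v.length

open Classical in
/-- The number of t-letters of a word (occurrences of t and t⁻¹). -/
noncomputable def tCount (w : List GG) : ℕ :=
  w.countP (fun x => decide (x = gt ∨ x = gt⁻¹))

/-- The word aˣ over A: x letters `a` if x ≥ 0, |x| letters `a⁻¹` if x < 0. -/
def apow (x : ℤ) : List GG :=
  if 0 ≤ x then List.replicate x.toNat ga else List.replicate (-x).toNat ga⁻¹

/-- The word metric on G with respect to A. -/
noncomputable def dA (g h : GG) : ℕ := wordLength (g⁻¹ * h)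

/-- The point of G reached at time i along the word w (the endpoint if i
exceeds the length of w). -/
def pt (w : List GG) (i : ℕ) : GG := (w.take i).prod

/-- Words u and w synchronously k-fellow travel. -/
def FellowTravels (k : ℕ) (u w : List GG) : Prop :=
  ∀ i : ℕ, dA (pt u i) (pt w i) ≤ k

/-!
Let `weight g = |x| + |y|` for `g = ((x, y), ε)`. A letter `a^{±1}` changes the weight by at most
one and `t` only swaps `x` and `y`, so every word `w` over A has `weight w.prod + tCount w ≤ w.length`.
Conversely `((x, y), 1) = aˣ t aʸ` and `((x, y), 0) = aˣ t aʸ t`, so every element has a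
representative of length at most `weight g + 2`; a geodesic word therefore has at most two t-letters.
-/

def weight (g : GG) : ℕ :=
  (Multiplicative.toAdd g.left).1.natAbs + (Multiplicative.toAdd g.left).2.natAbs

lemma weight_el (x y : ℤ) (ε : ZMod 2) : weight (el x y ε) = x.natAbs + y.natAbs := rfl

lemma exists_eq_el (g : GG) : ∃ x y ε, g = el x y ε := ⟨_, _, _, rfl⟩

lemma el_zero_mul_el (x y x' y' : ℤ) (ε : ZMod 2) :
    el x y 0 * el x' y' ε = el (x + x') (y + y') ε := by
  conv_rhs => rw [← zero_add ε]
  rfl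

lemma el_one_mul_el (x y x' y' : ℤ) (ε : ZMod 2) :
    el x y 1 * el x' y' ε = el (x + y') (y + x') (1 + ε) := rfl

lemma ga_eq_el : ga = el 1 0 0 := rfl

lemma ga_inv_eq_el : ga⁻¹ = el (-1) 0 0 := rfl

lemma gt_eq_el : gt = el 0 0 1 := rfl

lemma gt_inv : gt⁻¹ = gt := rfl

lemma ga_ne_gt : ga ≠ gt := by
  decide

lemma ga_inv_ne_gt : ga⁻¹ ≠ gt := by
  decide

lemma tCount_cons (c : GG) (w : List GG) :
    tCount (c :: w) = tCount w + if c = gt then 1 else 0 := by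
  simp [tCount, List.countP_cons, gt_inv]

lemma isWord_cons {c : GG} {w : List GG} : IsWord (c :: w) ↔ c ∈ GenSet ∧ IsWord w :=
  List.forall_mem_cons

lemma isWord_append {u v : List GG} : IsWord (u ++ v) ↔ IsWord u ∧ IsWord v :=
  List.forall_mem_append

lemma weight_mul_add_ite_le {c : GG} (hc : c ∈ GenSet) (g : GG) :
    weight (c * g) + (if c = gt then 1 else 0) ≤ weight g + 1 := by
  obtain ⟨x, y, ε, rfl⟩ := exists_eq_el g
  simp only [GenSet, gt_inv, Set.mem_insert_iff, Set.mem_singleton_iff, or_self] at hc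
  rcases hc with rfl | rfl | rfl
  · rw [if_neg ga_ne_gt, ga_eq_el, el_zero_mul_el, weight_el, weight_el]
    omega
  · rw [if_neg ga_inv_ne_gt, ga_inv_eq_el, el_zero_mul_el, weight_el, weight_el]
    omega
  · rw [gt_eq_el, el_one_mul_el, if_pos rfl, weight_el, weight_el]
    omega

theorem weight_prod_add_tCount_le_length {w : List GG} (hw : IsWord w) :
    weight w.prod + tCount w ≤ w.length := by
  induction w with
  | nil => rfl
  | cons c w ih =>
    obtain ⟨hc, hw⟩ := isWord_cons.1 hw
    have hstep := weight_mul_add_ite_le hc w.prod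
    have hrest := ih hw
    rw [List.prod_cons, tCount_cons, List.length_cons]
    omega

lemma ga_pow (n : ℕ) : ga ^ n = el n 0 0 := by
  induction n with
  | zero => rfl
  | succ n ih =>
    rw [pow_succ', ih, ga_eq_el, el_zero_mul_el]
    push_cast
    ring_nf

lemma ga_inv_pow (n : ℕ) : ga⁻¹ ^ n = el (-n) 0 0 := by
  induction n with
  | zero => rfl
  | succ n ih =>
    rw [pow_succ', ih, ga_inv_eq_el, el_zero_mul_el]
    push_cast
    ring_nf

lemma prod_apow (x : ℤ) : (apow x).prod = el x 0 0 := by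
  unfold apow
  split_ifs with hx
  · rw [List.prod_replicate, ga_pow, Int.toNat_of_nonneg hx]
  · rw [List.prod_replicate, ga_inv_pow, Int.toNat_of_nonneg (by omega), neg_neg]

lemma length_apow (x : ℤ) : (apow x).length = x.natAbs := by
  unfold apow
  split_ifs <;> simp only [List.length_replicate] <;> omega

lemma isWord_apow (x : ℤ) : IsWord (apow x) := by
  intro c hc
  unfold apow at hc
  split_ifs at hc <;> simp [List.eq_of_mem_replicate hc, GenSet]

lemma prod_apow_append_gt_cons_apow (x y : ℤ) : (apow x ++ gt :: apow y).prod = el x y 1 := by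
  rw [List.prod_append, List.prod_cons, prod_apow, prod_apow, gt_eq_el, el_one_mul_el,
    el_zero_mul_el]
  simp

theorem exists_isWord_prod_eq_length_le (g : GG) :
    ∃ v, IsWord v ∧ v.prod = g ∧ v.length ≤ weight g + 2 := by
  obtain ⟨x, y, ε, rfl⟩ := exists_eq_el g
  set u := apow x ++ gt :: apow y
  have hu : IsWord u := isWord_append.2
    ⟨isWord_apow x, isWord_cons.2 ⟨by simp [GenSet], isWord_apow y⟩⟩
  have hlen : u.length = x.natAbs + y.natAbs + 1 := by
    simp only [u, List.length_append, List.length_cons, length_apow]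
    omega
  rcases (by decide : ∀ ε : ZMod 2, ε = 0 ∨ ε = 1) ε with rfl | rfl
  · refine ⟨u ++ [gt], isWord_append.2 ⟨hu, by simp [IsWord, GenSet]⟩, ?_, ?_⟩
    · rw [List.prod_append, prod_apow_append_gt_cons_apow, List.prod_singleton, gt_eq_el,
        el_one_mul_el, add_zero, add_zero]
      rfl
    · simp only [List.length_append, hlen, weight_el, List.length_singleton]
      omega
  · exact ⟨u, hu, prod_apow_append_gt_cons_apow x y, by rw [hlen, weight_el]; omega⟩

/-- Every geodesic word over A contains at most two t-letters. -/
theorem geodesic_tCount_le_two (w : List GG) (hw : IsGeodesic w) : tCount w ≤ 2 := by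
  obtain ⟨v, hv, hprod, hlen⟩ := exists_isWord_prod_eq_length_le w.prod
  have hgeod := hw.2 v hv hprod
  have hlower := weight_prod_add_tCount_le_length hw.1
  omega
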